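/- The space (ω*)^{cf(𝔠)} admits a ⟨cf(𝔠), ω⟩-splitter; explicitly, the sequence of two-element open covers ⟨{π_α^{-1}(E*), π_α^{-1}(O*)}⟩_{α < cf 𝔠}, where E is the set of even numbers and O the set of odd numbers, is a ⟨cf(𝔠), ω⟩-splitter. Consequently Nt((ω*)^{cf 𝔠}) ≤ 𝔠. -/

import Mathlib

open Cardinal Set

universe u

variable {X : Type u}

/-- `B` is a base for the topology of `X`. -/
def IsBase [TopologicalSpace X] (B : Set (Set X)) : Prop :=
  (∀ U ∈ B, IsOpen U) ∧ ∀ W : Set X, IsOpen W → ∀ p ∈ W, ∃ U ∈ B, p ∈ U ∧ U ⊆ W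

/-- `B` is a local base at `p`. -/
def IsLocalBase [TopologicalSpace X] (p : X) (B : Set (Set X)) : Prop :=
  (∀ U ∈ B, IsOpen U ∧ p ∈ U) ∧ ∀ W : Set X, IsOpen W → p ∈ W → ∃ U ∈ B, U ⊆ W

/-- `B` is a local π-base at `p`. -/
def IsLocalPiBase [TopologicalSpace X] (p : X) (B : Set (Set X)) : Prop :=
  (∀ U ∈ B, IsOpen U ∧ U.Nonempty) ∧ ∀ W : Set X, IsOpen W → p ∈ W → ∃ U ∈ B, U ⊆ W

/-- The weight of `X`: the least infinite cardinal `κ` such that `X` has a base of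
cardinality at most `κ`. -/
noncomputable def weight (X : Type u) [TopologicalSpace X] : Cardinal.{u} :=
  sInf {κ | ℵ₀ ≤ κ ∧ ∃ B : Set (Set X), IsBase B ∧ #B ≤ κ}

/-- The character of `p` in `X`. -/
noncomputable def character [TopologicalSpace X] (p : X) : Cardinal.{u} :=
  sInf {κ | ℵ₀ ≤ κ ∧ ∃ B : Set (Set X), IsLocalBase p B ∧ #B ≤ κ}

/-- The π-character of `p` in `X`. -/
noncomputable def piCharacter [TopologicalSpace X] (p : X) : Cardinal.{u} :=
  sInf {κ | ℵ₀ ≤ κ ∧ ∃ B : Set (Set X), IsLocalPiBase p B ∧ #B ≤ κ}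

/-- A family of sets (ordered by `⊆`) is `κ^op`-like if no member is contained in
`κ`-many members. -/
def IsOpLike {Y : Type u} (B : Set (Set Y)) (κ : Cardinal.{u}) : Prop :=
  ∀ U ∈ B, #{V : Set Y // V ∈ B ∧ U ⊆ V} < κ

/-- The Noetherian type of `X`: the least infinite `κ` such that `X` has a
`κ^op`-like base. -/
noncomputable def Nt (X : Type u) [TopologicalSpace X] : Cardinal.{u} :=
  sInf {κ | ℵ₀ ≤ κ ∧ ∃ B : Set (Set X), IsBase B ∧ IsOpLike B κ}

/-- `⟨F i⟩` is a `⟨#ι, κ⟩`-splitter of `X`: a sequence of finite open covers such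
that for every index set `I` of cardinality `κ` and every choice `U i ∈ F i`
(`i ∈ I`), the interior of `⋂_{i ∈ I} U i` is empty. -/
def IsSplitter [TopologicalSpace X] {ι : Type u} (F : ι → Set (Set X))
    (κ : Cardinal.{u}) : Prop :=
  (∀ i, (F i).Finite ∧ (∀ U ∈ F i, IsOpen U) ∧ ⋃₀ F i = Set.univ) ∧
  ∀ (I : Set ι) (U : ι → Set X), #I = κ → (∀ i ∈ I, U i ∈ F i) →
    interior (⋂ i ∈ I, U i) = ∅

/-- `ω*`: the space of nonprincipal ultrafilters on `ω`. -/
def OmegaStar : Type := {p : Ultrafilter ℕ // ∀ x : Set ℕ, x ∈ p → x.Infinite}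

/-- The Stone topology on `ω*`. -/
instance : TopologicalSpace OmegaStar :=
  TopologicalSpace.generateFrom {S | ∃ x : Set ℕ, S = {q : OmegaStar | x ∈ q.1}}

/-- An index type of cardinality `cf 𝔠`. -/
def Idx : Type := (Cardinal.continuum.ord.cof).ord.ToType

/-- The two-element open cover at coordinate `α`, given by the even and odd sets. -/
def evenOddCover (α : Idx) : Set (Set (Idx → OmegaStar)) :=
  { (fun f => f α) ⁻¹' {q : OmegaStar | {n | Even n} ∈ q.1},
    (fun f => f α) ⁻¹' {q : OmegaStar | {n | Odd n} ∈ q.1} }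

/-! A base of size `κ` can be refined by intersecting each base set `b` with a member of the
cover `F (h b)`, where `h` sends fewer than `κ` base sets to each of the `cf κ` indices. A nonempty
open set lies inside members of only finitely many covers of a `⟨cf κ, ω⟩`-splitter, so it is
contained in fewer than `κ` members of the refined base; hence `Nt ≤ κ`. In `(ω*)^{cf 𝔠}`, which
has weight `𝔠`, the even/odd covers form such a splitter: a basic open set restricts only finitely
many coordinates, and `E*`, `O*` are proper subsets of `ω*`. -/

open TopologicalSpace Filter Function

theorem exists_mk_preimage_singleton_lt {κ : Cardinal.{u}} (hκ : ℵ₀ ≤ κ) {P ι : Type u}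
    (hP : #P ≤ κ) (hι : #ι = κ.ord.cof) : ∃ h : P → ι, ∀ i, #(h ⁻¹' {i}) < κ := by
  obtain ⟨e⟩ : Nonempty (P ↪ κ.ord.ToType) := by rwa [← Cardinal.le_def, mk_ord_toType]
  obtain ⟨S, hS, hSκ⟩ := Order.exists_cof_eq κ.ord.ToType
  rw [Ordinal.cof_toType, ← hι] at hSκ
  obtain ⟨σ⟩ : Nonempty (ι ≃ S) := Cardinal.eq.1 hSκ.symm
  choose g hgS hg using fun p => hS (e p)
  refine ⟨fun p => σ.symm ⟨g p, hgS p⟩, fun i => ?_⟩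
  have hfiber : (fun p => σ.symm ⟨g p, hgS p⟩) ⁻¹' {i} ⊆ e ⁻¹' Iic (σ i : κ.ord.ToType) := by
    intro p hp
    rw [mem_preimage, mem_singleton_iff, Equiv.symm_apply_eq] at hp
    rw [mem_preimage, mem_Iic, ← hp]
    exact hg p
  calc #((fun p => σ.symm ⟨g p, hgS p⟩) ⁻¹' {i})
      ≤ #(e ⁻¹' Iic (σ i : κ.ord.ToType)) := mk_le_mk_of_subset hfiber
    _ ≤ #(Iic (σ i : κ.ord.ToType)) := mk_preimage_of_injective _ _ e.injective
    _ < #κ.ord.ToType := mk_Iic_lt _ (by simp) (by simpa)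
    _ = κ := mk_ord_toType κ

theorem Set.Finite.mk_biUnion_lt {α ι : Type u} {A : Set ι} (hA : A.Finite) {κ : Cardinal.{u}}
    (hκ : ℵ₀ ≤ κ) {S : ι → Set α} (hS : ∀ i ∈ A, #(S i) < κ) : #(⋃ i ∈ A, S i) < κ := by
  induction A, hA using Set.Finite.induction_on with
  | empty => simpa using aleph0_pos.trans_le hκ
  | insert _ _ ih =>
    rw [biUnion_insert]
    exact (mk_union_le _ _).trans_lt (add_lt_of_lt hκ (hS _ (mem_insert _ _))
      (ih fun i hi => hS i (mem_insert_of_mem _ hi)))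

theorem TopologicalSpace.IsTopologicalBasis.isBase [TopologicalSpace X] {B : Set (Set X)}
    (hB : IsTopologicalBasis B) : IsBase B :=
  ⟨fun _ hU => hB.isOpen hU, fun _ hW _ hp => hB.exists_subset_of_mem_open hp hW⟩

theorem exists_isBase_pi_mk_le {ι Y : Type u} [TopologicalSpace Y] {b : Set (Set Y)}
    (hb : IsTopologicalBasis b) {κ : Cardinal.{u}} (hκ : ℵ₀ ≤ κ) (hι : #ι ≤ κ)
    (hbκ : #b ≤ κ) : ∃ B : Set (Set (ι → Y)), IsBase B ∧ #B ≤ κ := by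
  classical
  refine ⟨_, (isTopologicalBasis_pi fun _ : ι => hb).isBase, ?_⟩
  have hsub :
      {S | ∃ (U : ι → Set Y) (F : Finset ι), (∀ i ∈ F, U i ∈ b) ∧ S = (F : Set ι).pi U} ⊆
      range fun s : Finset (ι × b) => {f : ι → Y | ∀ p ∈ s, f p.1 ∈ (p.2 : Set Y)} := by
    rintro _ ⟨U, F, hU, rfl⟩
    refine ⟨F.attach.image fun i => (i.1, ⟨U i.1, hU i.1 i.2⟩), ?_⟩
    ext f
    simp only [Finset.mem_image, Finset.mem_attach, true_and, Subtype.exists, mem_ofPred_eq,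
      Set.mem_pi]
    exact ⟨fun h i hi => h _ ⟨i, hi, rfl⟩, by rintro h _ ⟨i, hi, rfl⟩; exact h i hi⟩
  calc _ ≤ #(Finset (ι × b)) := (mk_le_mk_of_subset hsub).trans mk_range_le
    _ ≤ #(List (ι × b)) := mk_le_of_surjective List.toFinset_surjective
    _ ≤ max ℵ₀ #(ι × b) := mk_list_le_max _
    _ ≤ κ := max_le hκ (by rw [mk_prod, lift_id, lift_id]; exact mul_le_of_le hκ hι hbκ)

theorem IsSplitter.finite_setOf_exists_mem_superset [TopologicalSpace X] {ι : Type u}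
    {F : ι → Set (Set X)} (hF : IsSplitter F ℵ₀) {V : Set X} (hVo : IsOpen V)
    (hVne : V.Nonempty) : {i | ∃ U ∈ F i, V ⊆ U}.Finite := by
  set A := {i | ∃ U ∈ F i, V ⊆ U}
  by_contra hA
  obtain ⟨I, hIA, hI⟩ :=
    le_mk_iff_exists_subset.1 (Cardinal.infinite_iff.1 (infinite_coe_iff.2 hA))
  choose! U hUF hVU using fun i (hi : i ∈ A) => hi
  have hV : V ⊆ interior (⋂ i ∈ I, U i) :=
    interior_maximal (subset_iInter₂ fun i hi => hVU i (hIA hi)) hVo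
  rw [hF.2 I U hI fun i hi => hUF i (hIA hi)] at hV
  exact hVne.ne_empty (subset_empty_iff.1 hV)

section RefinedBase

variable [TopologicalSpace X] {ι : Type u}

def refinedBase (B : Set (Set X)) (F : ι → Set (Set X)) (h : B → ι) : Set (Set X) :=
  {V | V.Nonempty ∧ ∃ b : B, ∃ U ∈ F (h b), V = (b : Set X) ∩ U}

theorem isBase_refinedBase {B : Set (Set X)} (hB : IsBase B) {F : ι → Set (Set X)}
    (hFo : ∀ i, ∀ U ∈ F i, IsOpen U) (hFc : ∀ i, ⋃₀ F i = Set.univ) (h : B → ι) :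
    IsBase (refinedBase B F h) := by
  refine ⟨?_, fun W hW x hx => ?_⟩
  · rintro _ ⟨-, b, U, hU, rfl⟩
    exact (hB.1 b b.2).inter (hFo _ U hU)
  · obtain ⟨b, hb, hxb, hbW⟩ := hB.2 W hW x hx
    obtain ⟨U, hU, hxU⟩ : x ∈ ⋃₀ F (h ⟨b, hb⟩) := by rw [hFc]; trivial
    exact ⟨b ∩ U, ⟨⟨x, hxb, hxU⟩, ⟨b, hb⟩, U, hU, rfl⟩, ⟨hxb, hxU⟩, inter_subset_left.trans hbW⟩

theorem isOpLike_refinedBase {κ : Cardinal.{u}} (hκ : ℵ₀ ≤ κ) {B : Set (Set X)}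
    (hB : ∀ b ∈ B, IsOpen b) {F : ι → Set (Set X)} (hF : IsSplitter F ℵ₀) {h : B → ι}
    (hh : ∀ i, #(h ⁻¹' {i}) < κ) : IsOpLike (refinedBase B F h) κ := by
  rintro _ ⟨hV₀, b₀, U₀, hU₀, rfl⟩
  set A := {i | ∃ U ∈ F i, (b₀ : Set X) ∩ U₀ ⊆ U}
  have hA : A.Finite :=
    hF.finite_setOf_exists_mem_superset ((hB _ b₀.2).inter ((hF.1 _).2.1 U₀ hU₀)) hV₀
  have hsub : {V | V ∈ refinedBase B F h ∧ (b₀ : Set X) ∩ U₀ ⊆ V} ⊆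
      (fun q : B × Set X => (q.1 : Set X) ∩ q.2) '' ⋃ i ∈ A, (h ⁻¹' {i}) ×ˢ F i := by
    rintro _ ⟨⟨-, b, U, hU, rfl⟩, hsup⟩
    exact ⟨(b, U), mem_biUnion ⟨U, hU, hsup.trans inter_subset_right⟩ ⟨rfl, hU⟩, rfl⟩
  calc #{V // V ∈ refinedBase B F h ∧ (b₀ : Set X) ∩ U₀ ⊆ V}
      ≤ #((fun q : B × Set X => (q.1 : Set X) ∩ q.2) '' ⋃ i ∈ A, (h ⁻¹' {i}) ×ˢ F i) :=
        mk_le_mk_of_subset hsub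
    _ ≤ #(⋃ i ∈ A, (h ⁻¹' {i}) ×ˢ F i) := mk_image_le
    _ < κ := hA.mk_biUnion_lt hκ fun i _ => by
        rw [mk_setProd]
        exact mul_lt_of_lt hκ (hh i) ((hF.1 i).1.lt_aleph0.trans_le hκ)

theorem Nt_le_of_isSplitter {κ : Cardinal.{u}} (hκ : ℵ₀ ≤ κ) {F : ι → Set (Set X)}
    (hF : IsSplitter F ℵ₀) (hι : #ι = κ.ord.cof) {B : Set (Set X)} (hB : IsBase B)
    (hBκ : #B ≤ κ) : Nt X ≤ κ := by
  obtain ⟨h, hh⟩ := exists_mk_preimage_singleton_lt hκ hBκ hι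
  exact csInf_le' ⟨hκ, refinedBase B F h,
    isBase_refinedBase hB (fun i => (hF.1 i).2.1) (fun i => (hF.1 i).2.2) h,
    isOpLike_refinedBase hκ hB.1 hF hh⟩

end RefinedBase

theorem IsOpen.exists_finset_update_mem {ι : Type*} {π : ι → Type*}
    [∀ i, TopologicalSpace (π i)] [DecidableEq ι] {W : Set (∀ i, π i)} (hW : IsOpen W)
    {f : ∀ i, π i} (hf : f ∈ W) : ∃ s : Finset ι, ∀ i ∉ s, ∀ y, update f i y ∈ W := by
  obtain ⟨s, u, hu, hsW⟩ := isOpen_pi_iff.1 hW f hf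
  refine ⟨s, fun i hi y => hsW fun j hj => ?_⟩
  rw [update_of_ne (by rintro rfl; exact hi hj)]
  exact (hu j hj).2

theorem isSplitter_preimage_eval {ι Y : Type u} [TopologicalSpace Y] {G : Set (Set Y)}
    (hG : G.Finite) (hGo : ∀ V ∈ G, IsOpen V) (hGc : ⋃₀ G = Set.univ) (hGu : Set.univ ∉ G) :
    IsSplitter (fun i : ι => (eval i ⁻¹' ·) '' G) ℵ₀ := by
  classical
  refine ⟨fun i => ⟨hG.image _, ?_, ?_⟩, fun I U hI hU => ?_⟩
  · rintro _ ⟨V, hV, rfl⟩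
    exact (hGo V hV).preimage (continuous_apply i)
  · rw [sUnion_image, ← preimage_iUnion₂, ← sUnion_eq_biUnion, hGc, preimage_univ]
  · refine eq_empty_iff_forall_notMem.2 fun f hf => ?_
    obtain ⟨s, hs⟩ := isOpen_interior.exists_finset_update_mem hf
    have hIinf : I.Infinite := infinite_coe_iff.1 (Cardinal.infinite_iff.2 hI.ge)
    obtain ⟨i, hiI, his⟩ := (hIinf.sdiff s.finite_toSet).nonempty
    obtain ⟨V, hVG, hVU⟩ := hU i hiI
    have hV : V = Set.univ := eq_univ_of_forall fun y => by
      have := mem_iInter₂.1 (interior_subset (hs i his y)) i hiI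
      rwa [← hVU, mem_preimage, eval, update_self] at this
    exact hGu (hV ▸ hVG)

namespace OmegaStar

def basicClopens : Set (Set OmegaStar) := {S | ∃ x : Set ℕ, S = {q | x ∈ q.1}}

theorem isTopologicalBasis_basicClopens : IsTopologicalBasis basicClopens := by
  have hinter : ∀ ⦃S⦄, S ∈ basicClopens → ∀ ⦃T⦄, T ∈ basicClopens → S ∩ T ∈ basicClopens := by
    rintro _ ⟨x, rfl⟩ _ ⟨y, rfl⟩
    exact ⟨x ∩ y, ext fun q => inter_mem_iff.symm⟩
  have huniv : Set.univ ∈ basicClopens := ⟨Set.univ, (eq_univ_of_forall fun q => univ_mem).symm⟩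
  have hbasis := isTopologicalBasis_of_subbasis_of_inter (t := inferInstance) rfl hinter
  rw [insert_eq_of_mem huniv] at hbasis
  exact hbasis

theorem mk_basicClopens_le : #basicClopens ≤ 𝔠 :=
  calc _ ≤ #(range fun x : Set ℕ => {q : OmegaStar | x ∈ q.1}) :=
        mk_le_mk_of_subset (by rintro _ ⟨x, rfl⟩; exact ⟨x, rfl⟩)
    _ ≤ #(Set ℕ) := mk_range_le
    _ = 𝔠 := mk_set_nat

theorem exists_mem_of_infinite {x : Set ℕ} (hx : x.Infinite) : ∃ q : OmegaStar, x ∈ q.1 :=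
  haveI := hx.cofinite_inf_principal_neBot
  ⟨⟨Ultrafilter.of (cofinite ⊓ 𝓟 x), fun _ hy hfin => compl_notMem hy
      (Ultrafilter.of_le _ (mem_inf_of_left hfin.compl_mem_cofinite))⟩,
    Ultrafilter.of_le _ (mem_inf_of_right (mem_principal_self x))⟩

end OmegaStar

theorem infinite_setOf_even : {n : ℕ | Even n}.Infinite :=
  infinite_of_forall_exists_gt fun n => ⟨2 * n + 2, ⟨n + 1, by ring⟩, by omega⟩

theorem infinite_setOf_odd : {n : ℕ | Odd n}.Infinite :=
  infinite_of_forall_exists_gt fun n => ⟨2 * n + 1, ⟨n, rfl⟩, by omega⟩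

theorem Ultrafilter.setOf_odd_mem_iff (q : Ultrafilter ℕ) :
    {n | Odd n} ∈ q ↔ {n | Even n} ∉ q := by
  rw [← Ultrafilter.compl_mem_iff_notMem]
  simp only [compl_ofPred, Nat.not_even_iff_odd]

theorem isSplitter_evenOddCover : IsSplitter evenOddCover ℵ₀ := by
  have hcover : evenOddCover = fun α => (fun V : Set OmegaStar => eval α ⁻¹' V) ''
      {{q : OmegaStar | {n | Even n} ∈ q.1}, {q : OmegaStar | {n | Odd n} ∈ q.1}} :=
    funext fun α => (image_pair _ _ _).symm
  rw [hcover]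
  refine isSplitter_preimage_eval (toFinite _) ?_ ?_ ?_
  · rintro _ (rfl | rfl) <;> exact isOpen_generateFrom_of_mem ⟨_, rfl⟩
  · refine eq_univ_of_forall fun q => ?_
    by_cases hq : {n | Even n} ∈ q.1
    · exact ⟨_, Or.inl rfl, hq⟩
    · exact ⟨_, Or.inr rfl, q.1.setOf_odd_mem_iff.2 hq⟩
  · rw [mem_insert_iff, mem_singleton_iff]
    rintro (h | h)
    · obtain ⟨q, hq⟩ := OmegaStar.exists_mem_of_infinite infinite_setOf_odd
      exact q.1.setOf_odd_mem_iff.1 hq (eq_univ_iff_forall.1 h.symm q)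
    · obtain ⟨q, hq⟩ := OmegaStar.exists_mem_of_infinite infinite_setOf_even
      exact q.1.setOf_odd_mem_iff.1 (eq_univ_iff_forall.1 h.symm q) hq

theorem mk_Idx : #Idx = Cardinal.continuum.ord.cof := by
  simp [Idx]

/-- The sequence `⟨{π_α⁻¹ E*, π_α⁻¹ O*}⟩_{α < cf 𝔠}` is a `⟨cf 𝔠, ω⟩`-splitter of
`(ω*)^{cf 𝔠}`; consequently `Nt((ω*)^{cf 𝔠}) ≤ 𝔠`. -/
theorem omegaStar_pow_cf_continuum_splitter :
    IsSplitter evenOddCover ℵ₀ ∧ Nt (Idx → OmegaStar) ≤ Cardinal.continuum := by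
  obtain ⟨B, hB, hBc⟩ := exists_isBase_pi_mk_le OmegaStar.isTopologicalBasis_basicClopens
    aleph0_le_continuum (mk_Idx.trans_le (Ordinal.cof_ord_le _)) OmegaStar.mk_basicClopens_le
  exact ⟨isSplitter_evenOddCover,
    Nt_le_of_isSplitter aleph0_le_continuum isSplitter_evenOddCover mk_Idx hB hBc⟩
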